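/- Let Π be a 3-decomposable 30-half-period. Then N_k^{bi}(Π) = 30 for every k = 11, 12, 13, 14. -/

import Mathlib

/-- An `n`-half-period: a sequence `π_0, …, π_{n(n-1)/2}` of arrangements of `n`
labeled elements in the positions `1, …, n` (recorded by `pos t x` = the position of
element `x` at time `t`), in which consecutive arrangements differ by a transposition
of the elements in two adjacent positions, and the last arrangement is the reverse of
the first. -/
structure HalfPeriod (n : ℕ) where
  pos : ℕ → Fin n → ℕ
  pos_mem : ∀ t, t ≤ n * (n - 1) / 2 → ∀ x, 1 ≤ pos t x ∧ pos t x ≤ n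
  pos_inj : ∀ t, t ≤ n * (n - 1) / 2 → Function.Injective (pos t)
  step : ∀ t, t < n * (n - 1) / 2 → ∃ x y : Fin n,
    pos t y = pos t x + 1 ∧ pos (t + 1) x = pos t x + 1 ∧ pos (t + 1) y = pos t x ∧
    ∀ z, z ≠ x → z ≠ y → pos (t + 1) z = pos t z
  reverse : ∀ x, pos (n * (n - 1) / 2) x = n + 1 - pos 0 x

namespace HalfPeriod

variable {n : ℕ}

/-- The number of transposition steps of an `n`-half-period. -/
def steps (n : ℕ) : ℕ := n * (n - 1) / 2

/-- Element `x` moves (changes position) at step `t`. -/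
def Moved (hp : HalfPeriod n) (t : ℕ) (x : Fin n) : Prop :=
  hp.pos (t + 1) x ≠ hp.pos t x

/-- Step `t` is the transposition of the (distinct) elements `x` and `y`. -/
def SwapsAt (hp : HalfPeriod n) (t : ℕ) (x y : Fin n) : Prop :=
  x ≠ y ∧ hp.Moved t x ∧ hp.Moved t y

/-- Step `t` is an `i`-transposition: it swaps the elements at positions `i` and `i+1`. -/
def GateAt (hp : HalfPeriod n) (t i : ℕ) : Prop :=
  ∃ x y : Fin n, hp.pos t x = i ∧ hp.pos t y = i + 1 ∧
    hp.pos (t + 1) x = i + 1 ∧ hp.pos (t + 1) y = i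

/-- Step `t` is an `i`-critical transposition: an `i`- or an `(n-i)`-transposition. -/
def Critical (hp : HalfPeriod n) (t i : ℕ) : Prop :=
  hp.GateAt t i ∨ hp.GateAt t (n - i)

/-- Step `t` is a `(≤ k)`-critical transposition. -/
def LeCritical (hp : HalfPeriod n) (t k : ℕ) : Prop :=
  ∃ i, 1 ≤ i ∧ i ≤ k ∧ hp.Critical t i

/-- `N_{≤ k}`: the number of `(≤ k)`-critical transpositions of the half-period. -/
noncomputable def NLe (hp : HalfPeriod n) (k : ℕ) : ℕ :=
  {t : ℕ | t < steps n ∧ hp.LeCritical t k}.ncard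

end HalfPeriod
/-- `hp` is a 3-decomposable `30`-half-period, witnessed by the labeling
`A = {a 0, …, a 9}`, `B = {b 0, …, b 9}`, `C = {c 0, …, c 9}` (the element with
1-indexed subscript `j` is `a (j-1)`, etc.): the initial arrangement is
`(a_10, a_9, …, a_1, b_1, …, b_10, c_1, …, c_10)`, every transposition between `A`
and `B` occurs before every transposition between `C` and `A ∪ B`, and every
transposition between `A` and `C` occurs before every transposition between `B`
and `C`. -/
def IsThreeDecompLabeling30 (hp : HalfPeriod 30) (a b c : Fin 10 → Fin 30) : Prop :=
  Function.Injective (Sum.elim a (Sum.elim b c)) ∧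
  (∀ i : Fin 10, hp.pos 0 (a i) = 10 - (i : ℕ)) ∧
  (∀ i : Fin 10, hp.pos 0 (b i) = 11 + (i : ℕ)) ∧
  (∀ i : Fin 10, hp.pos 0 (c i) = 21 + (i : ℕ)) ∧
  (∀ s t, s < HalfPeriod.steps 30 → t < HalfPeriod.steps 30 →
    (∃ i j, hp.SwapsAt s (a i) (b j)) →
    (∃ i x, ((∃ j, x = a j) ∨ (∃ j, x = b j)) ∧ hp.SwapsAt t (c i) x) → s < t) ∧
  (∀ s t, s < HalfPeriod.steps 30 → t < HalfPeriod.steps 30 →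
    (∃ i j, hp.SwapsAt s (a i) (c j)) →
    (∃ i j, hp.SwapsAt t (b i) (c j)) → s < t)

/-- `x` and `y` belong to the same one of the three classes `A`, `B`, `C`. -/
def SameClass (a b c : Fin 10 → Fin 30) (x y : Fin 30) : Prop :=
  (∃ i j, x = a i ∧ y = a j) ∨ (∃ i j, x = b i ∧ y = b j) ∨ (∃ i j, x = c i ∧ y = c j)
/-- `N_k^{bi}`: the number of bichromatic `k`-critical transpositions of `hp`. -/
noncomputable def NkBi (hp : HalfPeriod 30) (a b c : Fin 10 → Fin 30) (k : ℕ) : ℕ :=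
  {t : ℕ | t < HalfPeriod.steps 30 ∧ hp.Critical t k ∧
    ∃ x y, hp.SwapsAt t x y ∧ ¬ SameClass a b c x y}.ncard

/-!
Every pair of elements is transposed exactly once: it ends up reversed, so it is transposed an odd
number of times, and there are only `n.choose 2` steps. Hence a pair keeps its initial order
exactly until its transposition, and the left element of a transposed pair started to the left.

Fix a gate between positions `g` and `g + 1`, `11 ≤ g ≤ 19`. For a set `S` of elements, the number
of elements of `S` right of the gate goes up by one at each transposition at the gate moving an
element of `S` right past a non-element, and down by one at the converse ones. The bichromatic
transpositions at the gate move an element of `A` right past a non-element of `A`, or an element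
of `B` right past one of `C`. Since `A` goes from positions `1..10` to `21..30` and nothing
overtakes it from the left, there are `10` of the first kind. Since `B` occupies `11..20` at the
beginning and at the end, there are as many of the second kind as `A`–`B` transpositions at the
gate. These all happen before the first transposition between `C` and `A ∪ B`, at which time `A`
occupies positions `11..20`; applying the count to `A` up to that time gives `20 - g` of them. So
gate `g` carries `30 - g` bichromatic transpositions, and the gates `k` and `30 - k` carry `30`.
-/

open Finset

namespace HalfPeriod

variable {n : ℕ} (hp : HalfPeriod n) {t m : ℕ}

lemma pos_injective (hm : m ≤ steps n) : Function.Injective (hp.pos m) :=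
  hp.pos_inj m hm

lemma one_le_pos (hm : m ≤ steps n) (x : Fin n) : 1 ≤ hp.pos m x :=
  (hp.pos_mem m hm x).1

lemma pos_le (hm : m ≤ steps n) (x : Fin n) : hp.pos m x ≤ n :=
  (hp.pos_mem m hm x).2

lemma pos_steps (x : Fin n) : hp.pos (steps n) x = n + 1 - hp.pos 0 x :=
  hp.reverse x

def block (m lo hi : ℕ) : Finset (Fin n) := {x | hp.pos m x ∈ Icc lo hi}

lemma mem_block {lo hi : ℕ} {x : Fin n} :
    x ∈ hp.block m lo hi ↔ lo ≤ hp.pos m x ∧ hp.pos m x ≤ hi := by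
  simp [block]

lemma image_pos_univ (hm : m ≤ steps n) : univ.image (hp.pos m) = Icc 1 n := by
  refine eq_of_subset_of_card_le (fun p hp' => ?_) ?_
  · obtain ⟨x, -, rfl⟩ := mem_image.1 hp'
    exact mem_Icc.2 ⟨hp.one_le_pos hm x, hp.pos_le hm x⟩
  · rw [card_image_of_injective _ (hp.pos_injective hm)]
    simp

lemma card_block (hm : m ≤ steps n) {lo hi : ℕ} (hlo : 1 ≤ lo) (hhi : hi ≤ n) :
    #(hp.block m lo hi) = hi + 1 - lo := by
  have : (univ.image (hp.pos m)).filter (· ∈ Icc lo hi) =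
      (hp.block m lo hi).image (hp.pos m) := by
    rw [filter_image]
    rfl
  rw [← card_image_of_injective _ (hp.pos_injective hm), ← this, hp.image_pos_univ hm,
    filter_mem_eq_inter, inter_eq_right.2 (Icc_subset_Icc hlo hhi), Nat.card_Icc]

lemma block_zero_eq_block_steps (lo hi : ℕ) :
    hp.block 0 lo hi = hp.block (steps n) (n + 1 - hi) (n + 1 - lo) := by
  ext x
  have := hp.one_le_pos (Nat.zero_le _) x
  have := hp.pos_le (Nat.zero_le _) x
  rw [hp.mem_block, hp.mem_block, pos_steps]
  omega

def rightCount (S : Finset (Fin n)) (g m : ℕ) : ℕ := #{x ∈ S | g < hp.pos m x}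

lemma rightCount_block (hm : m ≤ steps n) {lo hi : ℕ} (hlo : 1 ≤ lo) (hhi : hi ≤ n) (g : ℕ) :
    hp.rightCount (hp.block m lo hi) g m = hi + 1 - max lo (g + 1) := by
  rw [rightCount, ← hp.card_block hm (le_max_of_le_left hlo) hhi]
  congr 1
  ext x
  simp only [mem_filter, hp.mem_block]
  omega

section Steps

variable [NeZero n]

noncomputable def left (t : ℕ) : Fin n :=
  if h : t < steps n then (hp.step t h).choose else 0

noncomputable def right (t : ℕ) : Fin n :=
  if h : t < steps n then (hp.step t h).choose_spec.choose else 0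

/-- Step `t` is a `(gate t)`-transposition. -/
noncomputable def gate (t : ℕ) : ℕ := hp.pos t (hp.left t)

noncomputable def swapPair (t : ℕ) : Sym2 (Fin n) := s(hp.left t, hp.right t)

lemma step_spec (ht : t < steps n) :
    hp.pos t (hp.right t) = hp.gate t + 1 ∧ hp.pos (t + 1) (hp.left t) = hp.gate t + 1 ∧
      hp.pos (t + 1) (hp.right t) = hp.gate t ∧
      ∀ z, z ≠ hp.left t → z ≠ hp.right t → hp.pos (t + 1) z = hp.pos t z := by
  simpa only [left, right, gate, dif_pos ht] using (hp.step t ht).choose_spec.choose_spec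

lemma pos_eq_gate_iff (ht : t < steps n) {x : Fin n} : hp.pos t x = hp.gate t ↔ x = hp.left t :=
  (hp.pos_injective ht.le).eq_iff' rfl

lemma pos_eq_gate_add_one_iff (ht : t < steps n) {x : Fin n} :
    hp.pos t x = hp.gate t + 1 ↔ x = hp.right t :=
  (hp.pos_injective ht.le).eq_iff' (hp.step_spec ht).1

lemma left_ne_right (ht : t < steps n) : hp.left t ≠ hp.right t := by
  intro h
  have := (hp.step_spec ht).1
  rw [← h] at this
  exact Nat.succ_ne_self _ this.symm

lemma pos_succ (ht : t < steps n) (x : Fin n) :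
    hp.pos (t + 1) x = Equiv.swap (hp.gate t) (hp.gate t + 1) (hp.pos t x) := by
  obtain ⟨hr, hl', hr', hz⟩ := hp.step_spec ht
  by_cases hxl : x = hp.left t
  · subst hxl
    rw [hl', gate, Equiv.swap_apply_left]
  by_cases hxr : x = hp.right t
  · subst hxr
    rw [hr', hr, Equiv.swap_apply_right]
  rw [hz x hxl hxr, Equiv.swap_apply_of_ne_of_ne]
  · exact (hp.pos_eq_gate_iff ht).not.2 hxl
  · exact (hp.pos_eq_gate_add_one_iff ht).not.2 hxr

lemma moved_iff (ht : t < steps n) {x : Fin n} :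
    hp.Moved t x ↔ x = hp.left t ∨ x = hp.right t := by
  rw [Moved, hp.pos_succ ht, Equiv.swap_apply_ne_self_iff, hp.pos_eq_gate_iff ht,
    hp.pos_eq_gate_add_one_iff ht]
  simp

lemma swapsAt_iff (ht : t < steps n) {x y : Fin n} :
    hp.SwapsAt t x y ↔ s(x, y) = hp.swapPair t := by
  have hlr := hp.left_ne_right ht
  rw [SwapsAt, hp.moved_iff ht, hp.moved_iff ht, swapPair, Sym2.eq_iff]
  constructor
  · rintro ⟨hxy, rfl | rfl, rfl | rfl⟩ <;> simp_all
  · rintro (⟨rfl, rfl⟩ | ⟨rfl, rfl⟩) <;> simp [hlr, hlr.symm]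

lemma exists_swapsAt_iff (ht : t < steps n) {P : Fin n → Fin n → Prop}
    (hP : ∀ x y, P x y → P y x) :
    (∃ x y, hp.SwapsAt t x y ∧ P x y) ↔ P (hp.left t) (hp.right t) := by
  simp only [hp.swapsAt_iff ht, swapPair, Sym2.eq_iff]
  constructor
  · rintro ⟨x, y, ⟨rfl, rfl⟩ | ⟨rfl, rfl⟩, h⟩
    exacts [h, hP _ _ h]
  · exact fun h => ⟨_, _, Or.inl ⟨rfl, rfl⟩, h⟩

lemma gateAt_iff (ht : t < steps n) {i : ℕ} : hp.GateAt t i ↔ hp.gate t = i := by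
  obtain ⟨hr, hl', hr', -⟩ := hp.step_spec ht
  constructor
  · rintro ⟨x, y, hx, -, hx', -⟩
    rw [hp.pos_succ ht, hx, Equiv.swap_apply_def] at hx'
    split_ifs at hx' <;> omega
  · rintro rfl
    exact ⟨hp.left t, hp.right t, rfl, hr, hl', hr'⟩

lemma critical_iff (ht : t < steps n) {i : ℕ} :
    hp.Critical t i ↔ hp.gate t = i ∨ hp.gate t = n - i := by
  rw [Critical, hp.gateAt_iff ht, hp.gateAt_iff ht]

lemma swapPair_eq_iff (ht : t < steps n) {u v : Fin n} :
    hp.swapPair t = s(u, v) ↔ (hp.pos t u = hp.gate t ∧ hp.pos t v = hp.gate t + 1) ∨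
      (hp.pos t v = hp.gate t ∧ hp.pos t u = hp.gate t + 1) := by
  rw [swapPair, Sym2.eq_iff, hp.pos_eq_gate_iff ht, hp.pos_eq_gate_iff ht,
    hp.pos_eq_gate_add_one_iff ht, hp.pos_eq_gate_add_one_iff ht]
  simp only [eq_comm]

lemma pos_succ_lt_iff (ht : t < steps n) {u v : Fin n} (huv : u ≠ v) :
    hp.pos (t + 1) u < hp.pos (t + 1) v ↔
      (hp.pos t u < hp.pos t v ↔ hp.swapPair t ≠ s(u, v)) := by
  have hne := (hp.pos_injective ht.le).ne huv
  rw [hp.pos_succ ht, hp.pos_succ ht, Ne, hp.swapPair_eq_iff ht, Equiv.swap_apply_def,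
    Equiv.swap_apply_def]
  split_ifs <;> omega

lemma pos_lt_iff_even (hm : m ≤ steps n) {u v : Fin n} (huv : u ≠ v) :
    hp.pos m u < hp.pos m v ↔
      (hp.pos 0 u < hp.pos 0 v ↔ Even #{t ∈ range m | hp.swapPair t = s(u, v)}) := by
  induction m with
  | zero => simp
  | succ m ih =>
    rw [hp.pos_succ_lt_iff (by omega) huv, ih (by omega), range_add_one, filter_insert]
    split_ifs with h
    · rw [card_insert_of_notMem (by simp), Nat.even_add_one]
      tauto
    · tauto

lemma odd_card_swapPair_eq {u v : Fin n} (huv : u ≠ v) :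
    Odd #{t ∈ range (steps n) | hp.swapPair t = s(u, v)} := by
  have h := hp.pos_lt_iff_even le_rfl huv
  have hne := (hp.pos_injective (Nat.zero_le _)).ne huv
  have := hp.one_le_pos (Nat.zero_le _) u
  have := hp.one_le_pos (Nat.zero_le _) v
  have := hp.pos_le (Nat.zero_le _) u
  have := hp.pos_le (Nat.zero_le _) v
  rw [pos_steps, pos_steps] at h
  by_contra hodd
  rw [Nat.not_odd_iff_even] at hodd
  simp only [hodd, iff_true] at h
  omega

lemma injOn_swapPair : Set.InjOn hp.swapPair (range (steps n)) := by
  refine injOn_of_surjOn_of_card_le (t := univ.offDiag.image Sym2.mk.uncurry) _ ?_ ?_ ?_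
  · intro t ht
    simp only [coe_image, coe_offDiag, coe_univ, Set.mem_image]
    exact ⟨(hp.left t, hp.right t), by simpa using hp.left_ne_right (mem_range.1 ht), rfl⟩
  · rintro _ hz
    obtain ⟨⟨u, v⟩, huv, rfl⟩ := mem_image.1 hz
    obtain ⟨t, ht⟩ := card_pos.1 (hp.odd_card_swapPair_eq (mem_offDiag.1 huv).2.2).pos
    exact ⟨t, by simpa using (mem_filter.1 ht).1, (mem_filter.1 ht).2⟩
  · rw [card_range, Sym2.card_image_offDiag, card_univ, Fintype.card_fin, Nat.choose_two_right]
    rfl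

lemma card_filter_swapPair_eq (ht : t < steps n) (hm : m ≤ steps n) :
    #{t' ∈ range m | hp.swapPair t' = hp.swapPair t} = if t < m then 1 else 0 := by
  have : {t' ∈ range m | hp.swapPair t' = hp.swapPair t} = {t' ∈ range m | t' = t} :=
    filter_congr fun t' ht' => hp.injOn_swapPair.eq_iff
      (by simpa using (mem_range.1 ht').trans_le hm) (by simpa using ht)
  rw [this, filter_eq']
  split_ifs <;> simp_all

lemma pos_left_lt_pos_right_iff (ht : t < steps n) (hm : m ≤ steps n) :
    hp.pos m (hp.left t) < hp.pos m (hp.right t) ↔ m ≤ t := by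
  have key := fun m (hm : m ≤ steps n) =>
    (hp.pos_lt_iff_even hm (hp.left_ne_right ht)).trans
      (by rw [← swapPair, hp.card_filter_swapPair_eq ht hm])
  have h0 : hp.pos 0 (hp.left t) < hp.pos 0 (hp.right t) := by
    have := key t ht.le
    rw [(hp.step_spec ht).1, gate, if_neg (lt_irrefl t)] at this
    simpa using this
  rw [key m hm]
  split_ifs <;> simp [h0] <;> omega

lemma pos_zero_left_lt_right (ht : t < steps n) :
    hp.pos 0 (hp.left t) < hp.pos 0 (hp.right t) :=
  (hp.pos_left_lt_pos_right_iff ht (Nat.zero_le _)).2 (Nat.zero_le _)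

lemma exists_eq_left_and_eq_right {u v : Fin n} (huv : hp.pos 0 u < hp.pos 0 v) :
    ∃ t < steps n, u = hp.left t ∧ v = hp.right t := by
  have hne : u ≠ v := by rintro rfl; exact lt_irrefl _ huv
  obtain ⟨t, ht⟩ := card_pos.1 (hp.odd_card_swapPair_eq hne).pos
  obtain ⟨ht, hs⟩ := mem_filter.1 ht
  refine ⟨t, mem_range.1 ht, ?_⟩
  rcases Sym2.eq_iff.1 hs with ⟨h1, h2⟩ | ⟨h1, h2⟩
  · exact ⟨h1.symm, h2.symm⟩
  · have := hp.pos_zero_left_lt_right (mem_range.1 ht)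
    rw [h1, h2] at this
    omega

noncomputable def rightCrossings (S : Finset (Fin n)) (g m : ℕ) : ℕ :=
  #{t ∈ range m | hp.gate t = g ∧ hp.left t ∈ S ∧ hp.right t ∉ S}

noncomputable def leftCrossings (S : Finset (Fin n)) (g m : ℕ) : ℕ :=
  #{t ∈ range m | hp.gate t = g ∧ hp.left t ∉ S ∧ hp.right t ∈ S}

lemma rightCount_succ (ht : t < steps n) (S : Finset (Fin n)) (g : ℕ) :
    hp.rightCount S g (t + 1) + (if hp.gate t = g ∧ hp.right t ∈ S then 1 else 0) =
      hp.rightCount S g t + (if hp.gate t = g ∧ hp.left t ∈ S then 1 else 0) := by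
  have hterm : ∀ x, (if g < hp.pos (t + 1) x then 1 else 0) +
      (if hp.gate t = g ∧ x = hp.right t then 1 else 0) =
      (if g < hp.pos t x then 1 else 0) + (if hp.gate t = g ∧ x = hp.left t then 1 else 0) := by
    intro x
    simp only [hp.pos_succ ht, ← hp.pos_eq_gate_iff ht, ← hp.pos_eq_gate_add_one_iff ht,
      Equiv.swap_apply_def]
    split_ifs <;> omega
  have hsum : ∀ y, (if hp.gate t = g ∧ y ∈ S then 1 else 0) =
      ∑ x ∈ S, if hp.gate t = g ∧ x = y then 1 else 0 := by
    intro y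
    by_cases hg : hp.gate t = g <;> simp [hg]
  simp only [rightCount, card_filter, hsum, ← sum_add_distrib, hterm]

theorem rightCount_add_leftCrossings (hm : m ≤ steps n) (S : Finset (Fin n)) (g : ℕ) :
    hp.rightCount S g m + hp.leftCrossings S g m =
      hp.rightCount S g 0 + hp.rightCrossings S g m := by
  induction m with
  | zero => simp [leftCrossings, rightCrossings]
  | succ m ih =>
    have hstep := hp.rightCount_succ (by omega : m < steps n) S g
    specialize ih (by omega)
    rw [leftCrossings, rightCrossings, card_filter, card_filter] at ih ⊢
    rw [sum_range_succ, sum_range_succ]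
    split_ifs at hstep ⊢ <;> first | omega | tauto

lemma leftCrossings_block_zero_one (hm : m ≤ steps n) (k g : ℕ) :
    hp.leftCrossings (hp.block 0 1 k) g m = 0 := by
  refine card_eq_zero.2 (filter_eq_empty_iff.2 fun t ht ⟨_, hl, hr⟩ => hl ?_)
  have := hp.pos_zero_left_lt_right ((mem_range.1 ht).trans_le hm)
  have := hp.one_le_pos (Nat.zero_le _) (hp.left t)
  rw [hp.mem_block] at hr ⊢
  omega

def IsSeparatingTime (p q T : ℕ) : Prop :=
  T ≤ steps n ∧
    (∀ t < steps n, hp.left t ∈ hp.block 0 1 p → hp.right t ∈ hp.block 0 (p + 1) q → t < T) ∧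
    ∀ t < T, hp.right t ∈ hp.block 0 (q + 1) n → hp.left t ∈ hp.block 0 (q + 1) n

variable {hp} in
lemma IsSeparatingTime.pos_second_lt_pos_first {p q T : ℕ} (hT : hp.IsSeparatingTime p q T)
    {x y : Fin n} (hx : x ∈ hp.block 0 1 p) (hy : y ∈ hp.block 0 (p + 1) q) :
    hp.pos T y < hp.pos T x := by
  obtain ⟨hT, hAB, -⟩ := hT
  have hxy : hp.pos 0 x < hp.pos 0 y := by
    rw [hp.mem_block] at hx hy
    omega
  obtain ⟨t, ht, rfl, rfl⟩ := hp.exists_eq_left_and_eq_right hxy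
  have := (hp.pos_left_lt_pos_right_iff ht hT).not.2 (not_le.2 (hAB t ht hx hy))
  have := (hp.pos_injective hT).ne (hp.left_ne_right ht)
  omega

variable {hp} in
lemma IsSeparatingTime.pos_first_lt_pos_third {p q T : ℕ} (hT : hp.IsSeparatingTime p q T)
    (hpq : p ≤ q) {x y : Fin n} (hx : x ∈ hp.block 0 1 p) (hy : y ∈ hp.block 0 (q + 1) n) :
    hp.pos T x < hp.pos T y := by
  obtain ⟨hT, -, hC⟩ := hT
  have hxy : hp.pos 0 x < hp.pos 0 y := by
    rw [hp.mem_block] at hx hy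
    omega
  obtain ⟨t, ht, rfl, rfl⟩ := hp.exists_eq_left_and_eq_right hxy
  refine (hp.pos_left_lt_pos_right_iff ht hT).2 (not_lt.1 fun htT => ?_)
  have := hC t htT hy
  rw [hp.mem_block] at hx this
  omega

lemma block_zero_eq_block_of_isSeparatingTime {p q T : ℕ} (hT : hp.IsSeparatingTime p q T)
    (hpq : p ≤ q) (hqn : q ≤ n) : hp.block 0 1 p = hp.block T (q - p + 1) q := by
  refine eq_of_subset_of_card_le (fun x hx => hp.mem_block.2 ⟨?_, ?_⟩) ?_
  · have := card_le_card (s := hp.block 0 (p + 1) q) (t := hp.block T 1 (hp.pos T x - 1))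
      fun y hy => hp.mem_block.2
        ⟨hp.one_le_pos hT.1 y, by have := hT.pos_second_lt_pos_first hx hy; omega⟩
    rw [hp.card_block (Nat.zero_le _) (by omega) hqn,
      hp.card_block hT.1 le_rfl (by have := hp.pos_le hT.1 x; omega)] at this
    have := hp.one_le_pos hT.1 x
    omega
  · have := card_le_card (s := hp.block 0 (q + 1) n) (t := hp.block T (hp.pos T x + 1) n)
      fun y hy => hp.mem_block.2
        ⟨by have := hT.pos_first_lt_pos_third hpq hx hy; omega, hp.pos_le hT.1 y⟩
    rw [hp.card_block (Nat.zero_le _) (by omega) le_rfl,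
      hp.card_block hT.1 (by omega) le_rfl] at this
    have := hp.pos_le hT.1 x
    omega
  · rw [hp.card_block hT.1 (by omega) hqn, hp.card_block (Nat.zero_le _) le_rfl (by omega)]
    omega

lemma leftCrossings_block_eq_rightCrossings_block {p q T : ℕ} (hT : hp.IsSeparatingTime p q T)
    (hpq : p ≤ q) (g : ℕ) :
    hp.leftCrossings (hp.block 0 (p + 1) q) g (steps n) =
      hp.rightCrossings (hp.block 0 1 p) g T := by
  obtain ⟨hT, hAB, hC⟩ := hT
  unfold leftCrossings rightCrossings
  congr 1
  ext t
  simp only [mem_filter, mem_range]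
  constructor
  · rintro ⟨ht, hg, hl, hr⟩
    have := hp.pos_zero_left_lt_right ht
    have := hp.one_le_pos (Nat.zero_le _) (hp.left t)
    have hl' : hp.left t ∈ hp.block 0 1 p := by
      rw [hp.mem_block] at hl hr ⊢
      omega
    refine ⟨hAB t ht hl' hr, hg, hl', fun h => ?_⟩
    rw [hp.mem_block] at h hr
    omega
  · rintro ⟨ht, hg, hl, hr⟩
    have ht' := ht.trans_le hT
    have hr' : hp.right t ∉ hp.block 0 (q + 1) n := fun h => by
      have := hp.mem_block.1 (hC t ht h)
      rw [hp.mem_block] at hl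
      omega
    have := hp.one_le_pos (Nat.zero_le _) (hp.right t)
    have := hp.pos_le (Nat.zero_le _) (hp.right t)
    refine ⟨ht', hg, fun h => ?_, ?_⟩
    · rw [hp.mem_block] at hl h
      omega
    · rw [hp.mem_block] at hr hr' ⊢
      omega

end Steps

end HalfPeriod

lemma SameClass.comm {a b c : Fin 10 → Fin 30} {x y : Fin 30} :
    SameClass a b c x y ↔ SameClass a b c y x := by
  unfold SameClass
  constructor <;>
    rintro (⟨i, j, rfl, rfl⟩ | ⟨i, j, rfl, rfl⟩ | ⟨i, j, rfl, rfl⟩) <;> simp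

instance (a b c : Fin 10 → Fin 30) : DecidableRel (SameClass a b c) := fun _ _ => by
  unfold SameClass
  infer_instance

open HalfPeriod in
lemma nkBi_eq_card (hp : HalfPeriod 30) (a b c : Fin 10 → Fin 30) (k : ℕ) :
    NkBi hp a b c k = #{t ∈ range (steps 30) |
      (hp.gate t = k ∨ hp.gate t = 30 - k) ∧ ¬ SameClass a b c (hp.left t) (hp.right t)} := by
  rw [NkBi, ← Set.ncard_coe_finset]
  congr 1
  ext t
  simp only [Set.mem_ofPred_eq, coe_filter, mem_range]
  by_cases ht : t < steps 30
  · rw [hp.critical_iff ht, hp.exists_swapsAt_iff ht fun x y h h' => h (SameClass.comm.1 h')]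
  · simp [ht]

namespace IsThreeDecompLabeling30

open HalfPeriod

variable {hp : HalfPeriod 30} {a b c : Fin 10 → Fin 30}

lemma pos_zero_a (h3 : IsThreeDecompLabeling30 hp a b c) (i : Fin 10) :
    hp.pos 0 (a i) = 10 - i := h3.2.1 i

lemma pos_zero_b (h3 : IsThreeDecompLabeling30 hp a b c) (i : Fin 10) :
    hp.pos 0 (b i) = 11 + i := h3.2.2.1 i

lemma pos_zero_c (h3 : IsThreeDecompLabeling30 hp a b c) (i : Fin 10) :
    hp.pos 0 (c i) = 21 + i := h3.2.2.2.1 i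

lemma exists_eq (h3 : IsThreeDecompLabeling30 hp a b c) (x : Fin 30) :
    (∃ i, x = a i) ∨ (∃ i, x = b i) ∨ (∃ i, x = c i) := by
  have hbij : Function.Bijective (Sum.elim a (Sum.elim b c)) :=
    (Fintype.bijective_iff_injective_and_card _).2 ⟨h3.1, by simp⟩
  obtain ⟨i | i | i, rfl⟩ := hbij.2 x
  exacts [Or.inl ⟨i, rfl⟩, Or.inr (Or.inl ⟨i, rfl⟩), Or.inr (Or.inr ⟨i, rfl⟩)]

lemma exists_eq_a (h3 : IsThreeDecompLabeling30 hp a b c) {x : Fin 30}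
    (hx : hp.pos 0 x ≤ 10) : ∃ i, x = a i := by
  rcases h3.exists_eq x with h | ⟨i, rfl⟩ | ⟨i, rfl⟩
  · exact h
  · rw [h3.pos_zero_b] at hx; omega
  · rw [h3.pos_zero_c] at hx; omega

lemma exists_eq_b (h3 : IsThreeDecompLabeling30 hp a b c) {x : Fin 30}
    (hx : 11 ≤ hp.pos 0 x) (hx' : hp.pos 0 x ≤ 20) : ∃ i, x = b i := by
  rcases h3.exists_eq x with ⟨i, rfl⟩ | h | ⟨i, rfl⟩
  · rw [h3.pos_zero_a] at hx; omega
  · exact h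
  · rw [h3.pos_zero_c] at hx'; omega

lemma exists_eq_c (h3 : IsThreeDecompLabeling30 hp a b c) {x : Fin 30}
    (hx : 21 ≤ hp.pos 0 x) : ∃ i, x = c i := by
  rcases h3.exists_eq x with ⟨i, rfl⟩ | ⟨i, rfl⟩ | h
  · rw [h3.pos_zero_a] at hx; omega
  · rw [h3.pos_zero_b] at hx; omega
  · exact h

lemma sameClass_iff (h3 : IsThreeDecompLabeling30 hp a b c) {x y : Fin 30} :
    SameClass a b c x y ↔
      ((hp.pos 0 x ≤ 10 ↔ hp.pos 0 y ≤ 10) ∧ (hp.pos 0 x ≤ 20 ↔ hp.pos 0 y ≤ 20)) := by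
  have := hp.one_le_pos (Nat.zero_le _) x
  have := hp.pos_le (Nat.zero_le _) x
  constructor
  · rintro (⟨i, j, rfl, rfl⟩ | ⟨i, j, rfl, rfl⟩ | ⟨i, j, rfl, rfl⟩) <;>
      simp only [h3.pos_zero_a, h3.pos_zero_b, h3.pos_zero_c] <;> omega
  · rintro ⟨h10, h20⟩
    by_cases hx : hp.pos 0 x ≤ 10
    · obtain ⟨i, rfl⟩ := h3.exists_eq_a hx
      obtain ⟨j, rfl⟩ := h3.exists_eq_a (h10.1 hx)
      exact Or.inl ⟨i, j, rfl, rfl⟩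
    by_cases hx' : hp.pos 0 x ≤ 20
    · obtain ⟨i, rfl⟩ := h3.exists_eq_b (x := x) (by omega) hx'
      obtain ⟨j, rfl⟩ := h3.exists_eq_b (x := y) (by omega) (by omega)
      exact Or.inr (Or.inl ⟨i, j, rfl, rfl⟩)
    · obtain ⟨i, rfl⟩ := h3.exists_eq_c (x := x) (by omega)
      obtain ⟨j, rfl⟩ := h3.exists_eq_c (x := y) (by omega)
      exact Or.inr (Or.inr ⟨i, j, rfl, rfl⟩)

lemma not_sameClass_iff (h3 : IsThreeDecompLabeling30 hp a b c) {t : ℕ}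
    (ht : t < steps 30) :
    ¬ SameClass a b c (hp.left t) (hp.right t) ↔
      (hp.left t ∈ hp.block 0 1 10 ∧ hp.right t ∉ hp.block 0 1 10) ∨
        (hp.left t ∈ hp.block 0 11 20 ∧ hp.right t ∉ hp.block 0 11 20) := by
  have := hp.pos_zero_left_lt_right ht
  have := hp.one_le_pos (Nat.zero_le _) (hp.left t)
  simp only [h3.sameClass_iff, hp.mem_block]
  omega

lemma lt_of_swap_ab_of_swap_c (h3 : IsThreeDecompLabeling30 hp a b c) {s t : ℕ}
    (hs : s < steps 30) (ht : t < steps 30) (hsl : hp.left s ∈ hp.block 0 1 10)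
    (hsr : hp.right s ∈ hp.block 0 11 20) (htr : hp.right t ∈ hp.block 0 21 30)
    (htl : hp.left t ∉ hp.block 0 21 30) : s < t := by
  rw [hp.mem_block] at hsl hsr htr htl
  have := hp.pos_le (Nat.zero_le _) (hp.left t)
  obtain ⟨i, hi⟩ := h3.exists_eq_a hsl.2
  obtain ⟨j, hj⟩ := h3.exists_eq_b hsr.1 hsr.2
  obtain ⟨k, hk⟩ := h3.exists_eq_c htr.1
  refine h3.2.2.2.2.1 s t hs ht ⟨i, j, ?_⟩ ⟨k, hp.left t, ?_, ?_⟩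
  · rw [← hi, ← hj, hp.swapsAt_iff hs]
    rfl
  · by_cases h10 : hp.pos 0 (hp.left t) ≤ 10
    exacts [Or.inl (h3.exists_eq_a h10), Or.inr (h3.exists_eq_b (by omega) (by omega))]
  · rw [← hk, hp.swapsAt_iff ht, swapPair, Sym2.eq_swap]

lemma exists_isSeparatingTime (h3 : IsThreeDecompLabeling30 hp a b c) :
    ∃ T, hp.IsSeparatingTime 10 20 T := by
  have hP : ∃ T, T = steps 30 ∨
      (T < steps 30 ∧ hp.right T ∈ hp.block 0 21 30 ∧ hp.left T ∉ hp.block 0 21 30) :=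
    ⟨_, Or.inl rfl⟩
  refine ⟨Nat.find hP, Nat.find_min' hP (Or.inl rfl), fun s hs hsl hsr => ?_, fun t ht => ?_⟩
  · rcases Nat.find_spec hP with h | ⟨hT, htr, htl⟩
    · exact hs.trans_eq h.symm
    · exact h3.lt_of_swap_ab_of_swap_c hs hT hsl hsr htr htl
  · have := Nat.find_min hP ht
    have := ht.trans_le (Nat.find_min' hP (Or.inl rfl))
    tauto

lemma card_bichromatic_at_gate_eq_add (h3 : IsThreeDecompLabeling30 hp a b c) (g : ℕ) :
    #{t ∈ range (steps 30) | hp.gate t = g ∧ ¬ SameClass a b c (hp.left t) (hp.right t)} =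
      hp.rightCrossings (hp.block 0 1 10) g (steps 30) +
        hp.rightCrossings (hp.block 0 11 20) g (steps 30) := by
  rw [filter_congr fun t ht => by rw [h3.not_sameClass_iff (mem_range.1 ht), and_or_left],
    filter_or, card_union_of_disjoint]
  · rfl
  · refine disjoint_filter.2 fun t _ h1 h2 => ?_
    have h1 := hp.mem_block.1 h1.2.1
    have h2 := hp.mem_block.1 h2.2.1
    omega

theorem card_bichromatic_at_gate (h3 : IsThreeDecompLabeling30 hp a b c) {g : ℕ} (hg : 11 ≤ g)
    (hg' : g ≤ 19) :
    #{t ∈ range (steps 30) | hp.gate t = g ∧ ¬ SameClass a b c (hp.left t) (hp.right t)} =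
      30 - g := by
  obtain ⟨T, hT⟩ := h3.exists_isSeparatingTime
  have hA := hp.rightCount_add_leftCrossings le_rfl (hp.block 0 1 10) g
  have hAT := hp.rightCount_add_leftCrossings hT.1 (hp.block 0 1 10) g
  have hB := hp.rightCount_add_leftCrossings le_rfl (hp.block 0 11 20) g
  rw [hp.leftCrossings_block_zero_one le_rfl] at hA
  rw [hp.leftCrossings_block_zero_one hT.1] at hAT
  rw [hp.leftCrossings_block_eq_rightCrossings_block hT (by norm_num)] at hB
  have h0 : hp.rightCount (hp.block 0 1 10) g 0 = 0 := by
    rw [hp.rightCount_block (Nat.zero_le _) le_rfl (by norm_num)]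
    omega
  have hA30 : hp.rightCount (hp.block 0 1 10) g (steps 30) = 10 := by
    rw [hp.block_zero_eq_block_steps, hp.rightCount_block le_rfl (by norm_num) le_rfl]
    omega
  have hAT' : hp.rightCount (hp.block 0 1 10) g T = 20 - g := by
    rw [hp.block_zero_eq_block_of_isSeparatingTime hT (by norm_num) (by norm_num),
      hp.rightCount_block hT.1 (by norm_num) (by norm_num)]
    omega
  have hB0 : hp.rightCount (hp.block 0 11 20) g 0 = 20 - g := by
    rw [hp.rightCount_block (Nat.zero_le _) (by norm_num) (by norm_num)]
    omega
  have hB30 : hp.rightCount (hp.block 0 11 20) g (steps 30) = 20 - g := by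
    rw [hp.block_zero_eq_block_steps, hp.rightCount_block le_rfl (by norm_num) (by norm_num)]
    omega
  rw [h3.card_bichromatic_at_gate_eq_add]
  omega

end IsThreeDecompLabeling30

/-- If `Π` is a 3-decomposable 30-half-period, then
`N_k^{bi}(Π) = 30` for every `k = 11, 12, 13, 14`. -/
theorem bichromatic_count_mid (hp : HalfPeriod 30) (a b c : Fin 10 → Fin 30)
    (h3 : IsThreeDecompLabeling30 hp a b c) :
    ∀ k : ℕ, 11 ≤ k → k ≤ 14 → NkBi hp a b c k = 30 := by
  intro k hk1 hk2
  rw [nkBi_eq_card, filter_congr fun _ _ => or_and_right, filter_or,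
    card_union_of_disjoint (disjoint_filter.2 fun _ _ h1 h2 => by omega),
    h3.card_bichromatic_at_gate (by omega) (by omega),
    h3.card_bichromatic_at_gate (by omega) (by omega)]
  omega
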